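/- arXiv:math/0606080 — 2 statements merged into one kernel-verified Lean document; each statement's English description precedes it below -/
import Mathlib

section
/- For every positive integer n, S_5(n) = (2n−1)·n^2·C(2n,n), i.e., Σ_{k=0}^{2n} C(2n,k)·|n−k|^5 = (2n−1)·n^2·C(2n,n). -/
/-!
The summand is invariant under `k ↦ 2n - k`, so the sum is twice the sum over `k < n`, where
`|n - k| = n - k`. That half-sum is Gosper-summable: with `j = n - k`, the term
`2 (n - k)^5 C(2n, k)` is the forward difference of `k · P_n(j) · C(2n, k)`, where
`P_n(j) = j^4 + 2j^3 + 2nj^2 + (2n - 1)(n + j)`. At `k = n` this antidifference equals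
`(2n - 1) n^2 C(2n, n)`, and at `k = 0` it vanishes.
-/

open Finset

theorem Nat.cast_choose_succ_right_eq {R : Type*} [CommRing R] (m k : ℕ) :
    (m.choose (k + 1) : R) * (k + 1) = m.choose k * (m - k) := by
  rcases le_or_gt k m with hkm | hmk
  · have h := congrArg (Nat.cast (R := R)) (Nat.choose_succ_right_eq m k)
    push_cast [hkm] at h
    exact h
  · rw [Nat.choose_eq_zero_of_lt hmk, Nat.choose_eq_zero_of_lt (by omega)]
    simp

theorem sum_range_two_mul_add_one_of_symm {M : Type*} [AddCommMonoid M] (n : ℕ) (f : ℕ → M)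
    (hf : ∀ k ≤ 2 * n, f (2 * n - k) = f k) :
    ∑ k ∈ range (2 * n + 1), f k = 2 • ∑ k ∈ range n, f k + f n := by
  have upper : ∑ j ∈ range n, f (n + 1 + j) = ∑ j ∈ range n, f j := by
    rw [← sum_range_reflect]
    refine sum_congr rfl fun j hj => ?_
    rw [mem_range] at hj
    rw [show n + 1 + (n - 1 - j) = 2 * n - j by omega, hf j (by omega)]
  rw [show 2 * n + 1 = n + 1 + n by ring, sum_range_add, upper, sum_range_succ, two_nsmul]
  abel

def gosperCert (n : ℕ) (j : ℤ) : ℤ :=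
  j ^ 4 + 2 * j ^ 3 + 2 * n * j ^ 2 + (2 * n - 1) * (n + j)

def fifthMomentAntidiff (n k : ℕ) : ℤ :=
  k * gosperCert n (n - k) * (2 * n).choose k

theorem fifthMomentAntidiff_succ_sub (n k : ℕ) :
    fifthMomentAntidiff n (k + 1) - fifthMomentAntidiff n k =
      2 * ((n : ℤ) - k) ^ 5 * (2 * n).choose k := by
  have hchoose := Nat.cast_choose_succ_right_eq (R := ℤ) (2 * n) k
  unfold fifthMomentAntidiff gosperCert
  push_cast at hchoose ⊢
  linear_combination (((n : ℤ) - (k + 1)) ^ 4 + 2 * ((n : ℤ) - (k + 1)) ^ 3 +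
      2 * n * ((n : ℤ) - (k + 1)) ^ 2 + (2 * n - 1) * (n + ((n : ℤ) - (k + 1)))) * hchoose

theorem two_mul_sum_range_choose_mul_pow_five (n : ℕ) :
    2 * ∑ k ∈ range n, ((2 * n).choose k : ℤ) * ((n : ℤ) - k) ^ 5 =
      (2 * n - 1) * n ^ 2 * (2 * n).choose n := by
  calc 2 * ∑ k ∈ range n, ((2 * n).choose k : ℤ) * ((n : ℤ) - k) ^ 5
      = ∑ k ∈ range n, (fifthMomentAntidiff n (k + 1) - fifthMomentAntidiff n k) := by
        rw [mul_sum]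
        exact sum_congr rfl fun k _ => by rw [fifthMomentAntidiff_succ_sub]; ring
    _ = fifthMomentAntidiff n n - fifthMomentAntidiff n 0 := sum_range_sub _ n
    _ = (2 * n - 1) * n ^ 2 * (2 * n).choose n := by
        simp only [fifthMomentAntidiff, gosperCert]
        push_cast
        ring

theorem stmt_7_general (n : ℕ) :
    ∑ k ∈ Finset.range (2 * n + 1), (Nat.choose (2 * n) k : ℤ) * |(n : ℤ) - k| ^ 5 =
      (2 * n - 1) * n ^ 2 * Nat.choose (2 * n) n := by
  have symm : ∀ k ≤ 2 * n, ((2 * n).choose (2 * n - k) : ℤ) * |(n : ℤ) - ↑(2 * n - k)| ^ 5 =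
      (2 * n).choose k * |(n : ℤ) - k| ^ 5 := fun k hk => by
    rw [Nat.choose_symm hk, Nat.cast_sub hk, ← abs_neg]
    push_cast
    ring_nf
  have half : ∀ k ∈ range n, ((2 * n).choose k : ℤ) * |(n : ℤ) - k| ^ 5 =
      (2 * n).choose k * ((n : ℤ) - k) ^ 5 := fun k hk => by
    rw [abs_of_nonneg (by have := mem_range.1 hk; omega)]
  rw [sum_range_two_mul_add_one_of_symm n _ symm, sum_congr rfl half, nsmul_eq_mul,
    Nat.cast_ofNat, two_mul_sum_range_choose_mul_pow_five]
  simp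

theorem stmt_7 (n : ℕ) (hn : 0 < n) :
    ∑ k ∈ Finset.range (2 * n + 1), (Nat.choose (2 * n) k : ℤ) * |(n : ℤ) - k| ^ 5 =
      (2 * n - 1) * n ^ 2 * Nat.choose (2 * n) n :=
  stmt_7_general n
end

section
/- Define polynomials Q_r over ℤ by Q_0(n) = 1 and Q_{r+1}(n) = 2n^2·(Q_r(n) − Q_r(n−1)) + n·Q_r(n−1). Then for every r ≥ 0, Q_r has degree r and its leading coefficient is (2r)!/(2^r·r!) (the double factorial (2r−1)!!). -/
/-!
Write `Q_r(X - 1)` as the Taylor shift of `Q_r` at `-1`. If `deg p ≤ n + 1`, the `n`-th coefficient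
of the shift is `p_n - (n + 1) p_{n+1}`, so `p - p(X - 1)` has degree `≤ n` with top coefficient
`(n + 1) p_{n+1}`, while the shift keeps the coefficient `p_{n+1}`. Hence the recursion multiplies
the leading coefficient `c_r` of `Q_r` by `2r + 1`, giving `c_r = (2r - 1)‼ = (2r)! / (2^r r!)`.
-/

open Polynomial

noncomputable def Qpoly : ℕ → Polynomial ℤ
  | 0 => 1
  | r + 1 =>
      2 * X ^ 2 * (Qpoly r - (Qpoly r).comp (X - 1)) + X * (Qpoly r).comp (X - 1)

open Nat

theorem Nat.factorial_two_mul_succ (r : ℕ) :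
    (2 * (r + 1))! = 2 ^ (r + 1) * (r + 1)! * (2 * r + 1)‼ := by
  rw [← doubleFactorial_two_mul, show 2 * (r + 1) = 2 * r + 1 + 1 by ring,
    factorial_eq_mul_doubleFactorial]

namespace Polynomial

variable {R : Type*}

section CommSemiring

variable [CommSemiring R]

theorem coeff_taylor_of_natDegree_le_succ {p : R[X]} {n : ℕ} (hp : p.natDegree ≤ n + 1) (r : R) :
    (taylor r p).coeff n = p.coeff n + (n + 1) * p.coeff (n + 1) * r := by
  have hdeg : (hasseDeriv n p).natDegree < 2 :=
    (natDegree_hasseDeriv_le p n).trans_lt (by omega)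
  rw [taylor_coeff, eval_eq_sum_range' hdeg, Finset.sum_range_succ, Finset.sum_range_one,
    hasseDeriv_coeff, hasseDeriv_coeff, add_comm 1 n, Nat.choose_succ_self_right]
  simp

theorem coeff_taylor_of_natDegree_le {p : R[X]} {n : ℕ} (hp : p.natDegree ≤ n) (r : R) :
    (taylor r p).coeff n = p.coeff n := by
  rw [coeff_taylor_of_natDegree_le_succ (hp.trans n.le_succ),
    coeff_eq_zero_of_natDegree_lt (Nat.lt_succ_of_le hp)]
  ring

end CommSemiring

section CommRing

variable [CommRing R]

theorem comp_X_sub_one_eq_taylor (p : R[X]) : p.comp (X - 1) = taylor (-1) p := by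
  rw [taylor_apply, C_neg, C_1, ← sub_eq_add_neg]

theorem natDegree_sub_comp_X_sub_one_le {p : R[X]} {n : ℕ} (hp : p.natDegree ≤ n + 1) :
    (p - p.comp (X - 1)).natDegree ≤ n := by
  refine natDegree_le_iff_coeff_eq_zero.mpr fun k hk => ?_
  rw [coeff_sub, comp_X_sub_one_eq_taylor, coeff_taylor_of_natDegree_le (by omega), sub_self]

theorem coeff_sub_comp_X_sub_one {p : R[X]} {n : ℕ} (hp : p.natDegree ≤ n + 1) :
    (p - p.comp (X - 1)).coeff n = (n + 1) * p.coeff (n + 1) := by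
  rw [coeff_sub, comp_X_sub_one_eq_taylor, coeff_taylor_of_natDegree_le_succ hp]
  ring

end CommRing

end Polynomial

theorem coeff_Qpoly_succ_add_two (r k : ℕ) :
    (Qpoly (r + 1)).coeff (k + 2) =
      2 * (Qpoly r - (Qpoly r).comp (X - 1)).coeff k + ((Qpoly r).comp (X - 1)).coeff (k + 1) := by
  rw [Qpoly, coeff_add, mul_assoc, ← C_ofNat, coeff_C_mul, coeff_X_pow_mul', coeff_X_mul]
  simp

theorem natDegree_Qpoly_succ_le_and_coeff (r : ℕ) :
    (Qpoly (r + 1)).natDegree ≤ r + 1 ∧ (Qpoly (r + 1)).coeff (r + 1) = ((2 * r + 1)‼ : ℤ) := by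
  induction r with
  | zero => simp [Qpoly]
  | succ r ih =>
    obtain ⟨hdeg, hcoeff⟩ := ih
    have hdiff := natDegree_sub_comp_X_sub_one_le hdeg
    have hcomp : ((Qpoly (r + 1)).comp (X - 1)).natDegree ≤ r + 1 := by
      rwa [comp_X_sub_one_eq_taylor, natDegree_taylor]
    constructor
    · refine natDegree_le_iff_coeff_eq_zero.mpr fun m hm => ?_
      obtain ⟨k, rfl⟩ : ∃ k, m = k + 2 := ⟨m - 2, by omega⟩
      rw [coeff_Qpoly_succ_add_two, coeff_eq_zero_of_natDegree_lt (by omega : _ < k),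
        coeff_eq_zero_of_natDegree_lt (by omega : _ < k + 1)]
      ring
    · rw [coeff_Qpoly_succ_add_two, coeff_sub_comp_X_sub_one hdeg, comp_X_sub_one_eq_taylor,
        coeff_taylor_of_natDegree_le hdeg, hcoeff, show 2 * (r + 1) + 1 = 2 * r + 1 + 2 by ring,
        doubleFactorial_add_two]
      push_cast
      ring

theorem stmt_14 (r : ℕ) :
    (Qpoly r).degree = r ∧
      (Qpoly r).leadingCoeff = ((Nat.factorial (2 * r) / (2 ^ r * Nat.factorial r) : ℕ) : ℤ) := by
  cases r with
  | zero => simp [Qpoly]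
  | succ r =>
    obtain ⟨hdeg, hcoeff⟩ := natDegree_Qpoly_succ_le_and_coeff r
    have hne : (Qpoly (r + 1)).coeff (r + 1) ≠ 0 := by
      rw [hcoeff]
      exact_mod_cast (doubleFactorial_pos _).ne'
    refine ⟨degree_eq_of_le_of_coeff_ne_zero (degree_le_of_natDegree_le hdeg) hne, ?_⟩
    rw [leadingCoeff, natDegree_eq_of_le_of_coeff_ne_zero hdeg hne, hcoeff,
      factorial_two_mul_succ, Nat.mul_div_cancel_left _ (by positivity)]
end
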